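/- arXiv:1103.4037 — 2 statements merged into one kernel-verified Lean document; each statement's English description precedes it below -/
import Mathlib

section
/- Let G=(V,E) be an undirected connected simple locally finite graph and let x be a vertex with d_x ≥ 2. Then the average curvature at x satisfies ((d_x−1)/d_x)·c(x) ≥ (1/d_x)·∑_{y∼x} κ(x,y) ≥ −2 + ((d_x−1)/(d_x∨D(x)))·c(x), where D(x) = max_{y∼x} d_y and d_x∨D(x) = max{d_x, D(x)}. -/
set_option linter.unusedSectionVars false
set_option maxHeartbeats 1000000


open SimpleGraph Finset

variable {V : Type*}

/-- The probability measure attached to a vertex `x`: uniform on its neighbors. -/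
noncomputable def nbrMeasure (G : SimpleGraph V) [G.LocallyFinite] [DecidableRel G.Adj]
    (x z : V) : ℝ :=
  if G.Adj x z then ((G.degree x : ℝ))⁻¹ else 0

/-- A coupling (transfer plan) between the measures `m_x` and `m_y`. -/
def IsCoupling (G : SimpleGraph V) [G.LocallyFinite] [DecidableRel G.Adj]
    (x y : V) (ξ : V → V → ℝ) : Prop :=
  (∀ u v, 0 ≤ ξ u v) ∧
  (∀ u v, ξ u v ≠ 0 → G.Adj x u ∧ G.Adj y v) ∧
  (∀ u, ∑ v ∈ G.neighborFinset y, ξ u v = nbrMeasure G x u) ∧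
  (∀ v, ∑ u ∈ G.neighborFinset x, ξ u v = nbrMeasure G y v)

/-- The transportation distance `W₁(m_x, m_y)`. -/
noncomputable def W1 (G : SimpleGraph V) [G.LocallyFinite] [DecidableRel G.Adj]
    (x y : V) : ℝ :=
  sInf { c : ℝ | ∃ ξ : V → V → ℝ, IsCoupling G x y ξ ∧
    c = ∑ u ∈ G.neighborFinset x, ∑ v ∈ G.neighborFinset y, (G.dist u v : ℝ) * ξ u v }

/-- Ollivier's Ricci curvature `κ(x,y) = 1 - W₁(m_x,m_y)/d(x,y)`. -/
noncomputable def ricci (G : SimpleGraph V) [G.LocallyFinite] [DecidableRel G.Adj]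
    (x y : V) : ℝ :=
  1 - W1 G x y / (G.dist x y : ℝ)

/-- Positive part of a real number: `a₊ = max a 0`. -/
noncomputable def posPart' (a : ℝ) : ℝ := max a 0

/-- `♯(x,y)`: the number of common neighbors of `x` and `y`. -/
def triangles (G : SimpleGraph V) [G.LocallyFinite] [DecidableEq V] (x y : V) : ℕ :=
  (G.neighborFinset x ∩ G.neighborFinset y).card

/-- The Watts–Strogatz local clustering coefficient
`c(x) = (1/(d_x(d_x-1)))·∑_{y∼x} ♯(x,y)`. -/
noncomputable def clustering (G : SimpleGraph V) [G.LocallyFinite] [DecidableEq V]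
    (x : V) : ℝ :=
  ((G.degree x : ℝ) * ((G.degree x : ℝ) - 1))⁻¹ *
    ∑ y ∈ G.neighborFinset x, (triangles G x y : ℝ)

section Aux

variable (G : SimpleGraph V) [G.LocallyFinite] [DecidableRel G.Adj] [DecidableEq V]

lemma nbrMeasure_nonneg (x u : V) : 0 ≤ nbrMeasure G x u := by
  unfold nbrMeasure; positivity

lemma nbrMeasure_of_adj {x u : V} (h : G.Adj x u) :
    nbrMeasure G x u = ((G.degree x : ℝ))⁻¹ := if_pos h

lemma degree_pos' {x y : V} (h : G.Adj x y) : 0 < G.degree x := by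
  rw [← card_neighborFinset_eq_degree, card_pos]
  exact ⟨y, by rwa [mem_neighborFinset]⟩

lemma sum_nbrMeasure {x y : V} (h : G.Adj x y) :
    ∑ u ∈ G.neighborFinset x, nbrMeasure G x u = 1 := by
  have hd := degree_pos' G h
  rw [Finset.sum_congr rfl (fun u hu => nbrMeasure_of_adj G ((mem_neighborFinset G x u).mp hu))]
  rw [Finset.sum_const, card_neighborFinset_eq_degree, nsmul_eq_mul]
  field_simp

/-- Existence of a good coupling. -/
lemma exists_good_coupling (hG : G.Connected) {x y : V} (h : G.Adj x y) :
    ∃ ξ : V → V → ℝ, IsCoupling G x y ξ ∧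
      ∑ u ∈ G.neighborFinset x, ∑ v ∈ G.neighborFinset y, (G.dist u v : ℝ) * ξ u v ≤
        3 - (triangles G x y : ℝ) * ((max (G.degree x) (G.degree y) : ℕ) : ℝ)⁻¹ := by
  classical
  set Nx := G.neighborFinset x with hNx
  set Ny := G.neighborFinset y with hNy
  set C : Finset V := Nx ∩ Ny with hC
  set M : ℝ := ((max (G.degree x) (G.degree y) : ℕ) : ℝ) with hM
  have hdx : (0:ℝ) < (G.degree x : ℝ) := by exact_mod_cast degree_pos' G h
  have hdy : (0:ℝ) < (G.degree y : ℝ) := by exact_mod_cast degree_pos' G h.symm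
  have hMcast : M = max ((G.degree x : ℝ)) ((G.degree y : ℝ)) := by
    rw [hM]; push_cast [Nat.cast_max]; ring_nf
  have hMpos : 0 < M := by rw [hMcast]; exact lt_max_of_lt_left hdx
  have hMx : M⁻¹ ≤ ((G.degree x : ℝ))⁻¹ := by
    apply inv_anti₀ hdx; rw [hMcast]; exact le_max_left _ _
  have hMy : M⁻¹ ≤ ((G.degree y : ℝ))⁻¹ := by
    apply inv_anti₀ hdy; rw [hMcast]; exact le_max_right _ _
  set t : ℝ := (triangles G x y : ℝ) with ht
  have ht0 : 0 ≤ t := Nat.cast_nonneg _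
  have htC : t = (C.card : ℝ) := rfl
  have hCx : C ⊆ Nx := inter_subset_left
  have hCy : C ⊆ Ny := inter_subset_right
  have htdx : t ≤ (G.degree x : ℝ) := by
    rw [htC, ← card_neighborFinset_eq_degree]
    exact_mod_cast card_le_card hCx
  have htdy : t ≤ (G.degree y : ℝ) := by
    rw [htC, ← card_neighborFinset_eq_degree]
    exact_mod_cast card_le_card hCy
  have htM : t ≤ M := le_trans htdx (by rw [hMcast]; exact le_max_left _ _)
  set ind : V → ℝ := fun u => if u ∈ C then M⁻¹ else 0 with hind
  set μ : V → ℝ := fun u => nbrMeasure G x u - ind u with hμ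
  set ν : V → ℝ := fun v => nbrMeasure G y v - ind v with hν
  have hadjC : ∀ u ∈ C, G.Adj x u ∧ G.Adj y u := by
    intro u hu
    rw [hC, mem_inter, mem_neighborFinset, mem_neighborFinset] at hu
    exact hu
  have hμ0 : ∀ u, 0 ≤ μ u := by
    intro u
    by_cases hu : u ∈ C
    · have := (hadjC u hu).1
      simp only [hμ, hind, if_pos hu, nbrMeasure_of_adj G this, sub_nonneg]
      exact hMx
    · simp only [hμ, hind, if_neg hu, sub_zero]
      exact nbrMeasure_nonneg G x u
  have hν0 : ∀ v, 0 ≤ ν v := by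
    intro v
    by_cases hv : v ∈ C
    · have := (hadjC v hv).2
      simp only [hν, hind, if_pos hv, nbrMeasure_of_adj G this, sub_nonneg]
      exact hMy
    · simp only [hν, hind, if_neg hv, sub_zero]
      exact nbrMeasure_nonneg G y v
  have hμsupp : ∀ u, ¬ G.Adj x u → μ u = 0 := by
    intro u hu
    have h1 : u ∉ C := fun hc => hu (hadjC u hc).1
    simp only [hμ, hind, if_neg h1, sub_zero, nbrMeasure, if_neg hu]
  have hνsupp : ∀ v, ¬ G.Adj y v → ν v = 0 := by
    intro v hv
    have h1 : v ∉ C := fun hc => hv (hadjC v hc).2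
    simp only [hν, hind, if_neg h1, sub_zero, nbrMeasure, if_neg hv]
  have hsum_ind_x : ∑ u ∈ Nx, ind u = t * M⁻¹ := by
    rw [hind]
    rw [Finset.sum_ite_mem, inter_eq_right.mpr hCx, Finset.sum_const, htC, nsmul_eq_mul]
  have hsum_ind_y : ∑ v ∈ Ny, ind v = t * M⁻¹ := by
    rw [hind]
    rw [Finset.sum_ite_mem, inter_eq_right.mpr hCy, Finset.sum_const, htC, nsmul_eq_mul]
  set r : ℝ := 1 - t * M⁻¹ with hr
  have hr0 : 0 ≤ r := by
    rw [hr, sub_nonneg]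
    calc t * M⁻¹ ≤ M * M⁻¹ := by apply mul_le_mul_of_nonneg_right htM (by positivity)
    _ = 1 := mul_inv_cancel₀ hMpos.ne'
  have hμsum : ∑ u ∈ Nx, μ u = r := by
    rw [hμ]; rw [Finset.sum_sub_distrib, sum_nbrMeasure G h, hsum_ind_x]
  have hνsum : ∑ v ∈ Ny, ν v = r := by
    rw [hν]; rw [Finset.sum_sub_distrib, sum_nbrMeasure G h.symm, hsum_ind_y]
  -- the degenerate case r = 0
  have hdegen : r = 0 → (∀ u, ind u = nbrMeasure G x u) ∧ (∀ v, ind v = nbrMeasure G y v) := by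
    intro hr0'
    have h1 : t * M⁻¹ = 1 := by rw [hr] at hr0'; linarith
    have hteqM : t = M := by
      field_simp [hMpos.ne'] at h1
      linarith
    have hxM : (G.degree x : ℝ) = M := le_antisymm (by rw [hMcast]; exact le_max_left _ _)
      (by rw [← hteqM]; exact htdx)
    have hyM : (G.degree y : ℝ) = M := le_antisymm (by rw [hMcast]; exact le_max_right _ _)
      (by rw [← hteqM]; exact htdy)
    have hCNx : C = Nx := by
      apply Finset.eq_of_subset_of_card_le hCx
      have : (Nx.card : ℝ) = (C.card : ℝ) := by
        rw [← htC, hteqM, ← hxM, card_neighborFinset_eq_degree]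
      exact_mod_cast this.le
    have hCNy : C = Ny := by
      apply Finset.eq_of_subset_of_card_le hCy
      have : (Ny.card : ℝ) = (C.card : ℝ) := by
        rw [← htC, hteqM, ← hyM, card_neighborFinset_eq_degree]
      exact_mod_cast this.le
    constructor
    · intro u
      by_cases hu : G.Adj x u
      · have : u ∈ C := by rw [hCNx, hNx, mem_neighborFinset]; exact hu
        rw [hind]; simp only [if_pos this, nbrMeasure_of_adj G hu, hxM]
      · have : u ∉ C := by rw [hCNx, hNx, mem_neighborFinset]; exact hu
        rw [hind]; simp only [if_neg this, nbrMeasure, if_neg hu]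
    · intro v
      by_cases hv : G.Adj y v
      · have : v ∈ C := by rw [hCNy, hNy, mem_neighborFinset]; exact hv
        rw [hind]; simp only [if_pos this, nbrMeasure_of_adj G hv, hyM]
      · have : v ∉ C := by rw [hCNy, hNy, mem_neighborFinset]; exact hv
        rw [hind]; simp only [if_neg this, nbrMeasure, if_neg hv]
  refine ⟨fun u v => (if u = v ∧ u ∈ C then M⁻¹ else 0) + r⁻¹ * (μ u * ν v), ⟨?_, ?_, ?_, ?_⟩, ?_⟩
  · intro u v
    apply add_nonneg
    · split <;> positivity
    · have := hμ0 u; have := hν0 v; positivity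
  · intro u v huv
    by_contra hcon
    apply huv
    show (if u = v ∧ u ∈ C then M⁻¹ else 0) + r⁻¹ * (μ u * ν v) = 0
    rcases Decidable.not_and_iff_or_not.mp hcon with hxu | hyv
    · have h1 : ¬ (u = v ∧ u ∈ C) := fun hc => hxu (hadjC u hc.2).1
      rw [if_neg h1, hμsupp u hxu]; ring
    · have h1 : ¬ (u = v ∧ u ∈ C) := by
        rintro ⟨rfl, hc⟩; exact hyv (hadjC u hc).2
      rw [if_neg h1, hνsupp v hyv]; ring
  · intro u
    show ∑ v ∈ G.neighborFinset y, ((if u = v ∧ u ∈ C then M⁻¹ else 0) + r⁻¹ * (μ u * ν v)) =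
      nbrMeasure G x u
    rw [← hNy, Finset.sum_add_distrib]
    have h1 : ∑ v ∈ Ny, (if u = v ∧ u ∈ C then M⁻¹ else 0) = ind u := by
      by_cases hu : u ∈ C
      · simp only [hu, and_true]
        rw [Finset.sum_ite_eq Ny u (fun _ => M⁻¹), if_pos (hCy hu)]
        simp only [hind, if_pos hu]
      · simp only [hind, if_neg hu]
        apply Finset.sum_eq_zero
        intro v _
        rw [if_neg (fun hc => hu hc.2)]
    have h2 : ∑ v ∈ Ny, r⁻¹ * (μ u * ν v) = r⁻¹ * (μ u * r) := by
      rw [← Finset.mul_sum, ← Finset.mul_sum, hνsum]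
    rw [h1, h2]
    by_cases hrz : r = 0
    · rw [hrz, mul_zero, mul_zero, add_zero]
      exact (hdegen hrz).1 u
    · rw [mul_comm (μ u) r, ← mul_assoc, inv_mul_cancel₀ hrz, one_mul]
      simp only [hμ]; ring
  · intro v
    show ∑ u ∈ G.neighborFinset x, ((if u = v ∧ u ∈ C then M⁻¹ else 0) + r⁻¹ * (μ u * ν v)) =
      nbrMeasure G y v
    rw [← hNx, Finset.sum_add_distrib]
    have h1 : ∑ u ∈ Nx, (if u = v ∧ u ∈ C then M⁻¹ else 0) = ind v := by
      by_cases hv : v ∈ C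
      · have : ∀ u, (u = v ∧ u ∈ C) = (u = v) := by
          intro u; ext; constructor
          · exact fun hc => hc.1
          · rintro rfl; exact ⟨rfl, hv⟩
        simp only [this]
        rw [Finset.sum_ite_eq' Nx v (fun _ => M⁻¹), if_pos (hCx hv)]
        simp only [hind, if_pos hv]
      · simp only [hind, if_neg hv]
        apply Finset.sum_eq_zero
        intro u _
        rw [if_neg]; rintro ⟨rfl, hc⟩; exact hv hc
    have h2 : ∑ u ∈ Nx, r⁻¹ * (μ u * ν v) = r⁻¹ * (r * ν v) := by
      rw [← Finset.mul_sum, ← Finset.sum_mul, hμsum]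
    rw [h1, h2]
    by_cases hrz : r = 0
    · rw [hrz, zero_mul, mul_zero, add_zero]
      exact (hdegen hrz).2 v
    · rw [← mul_assoc, inv_mul_cancel₀ hrz, one_mul]
      simp only [hν]; ring
  · -- cost bound
    have hterm : ∀ u ∈ Nx, ∀ v ∈ Ny,
        (G.dist u v : ℝ) * ((if u = v ∧ u ∈ C then M⁻¹ else 0) + r⁻¹ * (μ u * ν v)) ≤
          3 * (r⁻¹ * (μ u * ν v)) := by
      intro u hu v hv
      have hd3 : (G.dist u v : ℝ) ≤ 3 := by
        have h1 : G.dist u v ≤ G.dist u x + G.dist x v := hG.dist_triangle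
        have h2 : G.dist x v ≤ G.dist x y + G.dist y v := hG.dist_triangle
        have hux : G.dist u x = 1 := by
          rw [dist_eq_one_iff_adj]
          exact ((mem_neighborFinset G x u).mp hu).symm
        have hxy : G.dist x y = 1 := by rw [dist_eq_one_iff_adj]; exact h
        have hyv : G.dist y v = 1 := by
          rw [dist_eq_one_iff_adj]
          exact (mem_neighborFinset G y v).mp hv
        have : G.dist u v ≤ 3 := by omega
        exact_mod_cast this
      by_cases huv : u = v ∧ u ∈ C
      · rcases huv with ⟨rfl, hc⟩
        rw [if_pos ⟨rfl, hc⟩, SimpleGraph.dist_self]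
        push_cast
        rw [zero_mul]
        have := hμ0 u; have := hν0 u; positivity
      · rw [if_neg huv, zero_add]
        apply mul_le_mul_of_nonneg_right hd3
        have := hμ0 u; have := hν0 v; positivity
    show ∑ u ∈ G.neighborFinset x, ∑ v ∈ G.neighborFinset y, (G.dist u v : ℝ) *
        ((if u = v ∧ u ∈ C then M⁻¹ else 0) + r⁻¹ * (μ u * ν v)) ≤ 3 - t * M⁻¹
    rw [← hNx, ← hNy]
    calc ∑ u ∈ Nx, ∑ v ∈ Ny, (G.dist u v : ℝ) *
          ((if u = v ∧ u ∈ C then M⁻¹ else 0) + r⁻¹ * (μ u * ν v))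
        ≤ ∑ u ∈ Nx, ∑ v ∈ Ny, 3 * (r⁻¹ * (μ u * ν v)) := by
          apply Finset.sum_le_sum
          intro u hu
          apply Finset.sum_le_sum
          intro v hv
          exact hterm u hu v hv
      _ = ∑ u ∈ Nx, ∑ v ∈ Ny, (3 * r⁻¹ * μ u) * ν v :=
          Finset.sum_congr rfl fun u _ => Finset.sum_congr rfl fun v _ => by ring
      _ = (∑ u ∈ Nx, 3 * r⁻¹ * μ u) * (∑ v ∈ Ny, ν v) := (Finset.sum_mul_sum _ _ _ _).symm
      _ = 3 * r⁻¹ * (r * r) := by rw [← Finset.mul_sum, hμsum, hνsum]; ring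
      _ ≤ 3 - t * M⁻¹ := by
          by_cases hrz : r = 0
          · rw [hrz, mul_zero, mul_zero]
            have : t * M⁻¹ ≤ 1 := by rw [hr] at hr0; linarith
            linarith
          · rw [mul_assoc, ← mul_assoc r⁻¹, inv_mul_cancel₀ hrz, one_mul]
            have h1 : 0 ≤ t * M⁻¹ := by positivity
            rw [hr]; linarith

lemma cost_lower (hG : G.Connected) {x y : V} (h : G.Adj x y) (ξ : V → V → ℝ)
    (hξ : IsCoupling G x y ξ) :
    1 - (triangles G x y : ℝ) * ((G.degree x : ℝ))⁻¹ ≤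
      ∑ u ∈ G.neighborFinset x, ∑ v ∈ G.neighborFinset y, (G.dist u v : ℝ) * ξ u v := by
  obtain ⟨hpos, _, hrow, _⟩ := hξ
  have key : ∀ u ∈ G.neighborFinset x, ∀ v ∈ G.neighborFinset y,
      ξ u v - (if u = v then ξ u v else 0) ≤ (G.dist u v : ℝ) * ξ u v := by
    intro u _ v _
    by_cases huv : u = v
    · subst huv; rw [if_pos rfl, SimpleGraph.dist_self]; simp
    · rw [if_neg huv]
      have h1 : 0 < G.dist u v := hG.pos_dist_of_ne huv
      have h2 : (1:ℝ) ≤ (G.dist u v : ℝ) := by exact_mod_cast h1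
      nlinarith [hpos u v]
  have hsum1 : ∑ u ∈ G.neighborFinset x, ∑ v ∈ G.neighborFinset y, ξ u v = 1 := by
    rw [Finset.sum_congr rfl (fun u _ => hrow u), sum_nbrMeasure G h]
  have hdiag : ∑ u ∈ G.neighborFinset x, ∑ v ∈ G.neighborFinset y, (if u = v then ξ u v else 0)
      ≤ (triangles G x y : ℝ) * ((G.degree x : ℝ))⁻¹ := by
    have hinner : ∀ u ∈ G.neighborFinset x,
        ∑ v ∈ G.neighborFinset y, (if u = v then ξ u v else 0) ≤
          (if u ∈ G.neighborFinset y then nbrMeasure G x u else 0) := by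
      intro u hu
      rw [Finset.sum_ite_eq (G.neighborFinset y) u (fun v => ξ u v)]
      by_cases huy : u ∈ G.neighborFinset y
      · rw [if_pos huy, if_pos huy, ← hrow u]
        exact Finset.single_le_sum (fun v _ => hpos u v) huy
      · rw [if_neg huy, if_neg huy]
    calc ∑ u ∈ G.neighborFinset x, ∑ v ∈ G.neighborFinset y, (if u = v then ξ u v else 0)
        ≤ ∑ u ∈ G.neighborFinset x, (if u ∈ G.neighborFinset y then nbrMeasure G x u else 0) :=
          Finset.sum_le_sum hinner
      _ = ∑ u ∈ G.neighborFinset x ∩ G.neighborFinset y, nbrMeasure G x u :=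
          Finset.sum_ite_mem _ _ _
      _ = (triangles G x y : ℝ) * ((G.degree x : ℝ))⁻¹ := by
          rw [Finset.sum_congr rfl (fun u hu => nbrMeasure_of_adj G
            ((mem_neighborFinset G x u).mp (Finset.mem_of_mem_inter_left hu)))]
          rw [Finset.sum_const, nsmul_eq_mul]
          rfl
  calc 1 - (triangles G x y : ℝ) * ((G.degree x : ℝ))⁻¹
      ≤ ∑ u ∈ G.neighborFinset x, ∑ v ∈ G.neighborFinset y,
          (ξ u v - (if u = v then ξ u v else 0)) := by
        simp only [Finset.sum_sub_distrib]
        rw [hsum1]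
        linarith
    _ ≤ ∑ u ∈ G.neighborFinset x, ∑ v ∈ G.neighborFinset y, (G.dist u v : ℝ) * ξ u v := by
        apply Finset.sum_le_sum
        intro u hu
        exact Finset.sum_le_sum (fun v hv => key u hu v hv)

lemma W1_le_bound (hG : G.Connected) {x y : V} (h : G.Adj x y) :
    W1 G x y ≤ 3 - (triangles G x y : ℝ) * ((max (G.degree x) (G.degree y) : ℕ) : ℝ)⁻¹ := by
  obtain ⟨ξ, hξ, hcost⟩ := exists_good_coupling G hG h
  refine le_trans (csInf_le ?_ ⟨ξ, hξ, rfl⟩) hcost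
  refine ⟨1 - (triangles G x y : ℝ) * ((G.degree x : ℝ))⁻¹, ?_⟩
  rintro c ⟨ζ, hζ, rfl⟩
  exact cost_lower G hG h ζ hζ

lemma le_W1_bound (hG : G.Connected) {x y : V} (h : G.Adj x y) :
    1 - (triangles G x y : ℝ) * ((G.degree x : ℝ))⁻¹ ≤ W1 G x y := by
  obtain ⟨ξ, hξ, _⟩ := exists_good_coupling G hG h
  refine le_csInf ⟨_, ξ, hξ, rfl⟩ ?_
  rintro c ⟨ζ, hζ, rfl⟩
  exact cost_lower G hG h ζ hζ

lemma ricci_eq (hG : G.Connected) {x y : V} (h : G.Adj x y) :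
    ricci G x y = 1 - W1 G x y := by
  unfold ricci
  rw [SimpleGraph.dist_eq_one_iff_adj.mpr h]
  norm_num

lemma ricci_le_bound (hG : G.Connected) {x y : V} (h : G.Adj x y) :
    ricci G x y ≤ (triangles G x y : ℝ) * ((G.degree x : ℝ))⁻¹ := by
  rw [ricci_eq G hG h]
  linarith [le_W1_bound G hG h]

lemma le_ricci_bound (hG : G.Connected) {x y : V} (h : G.Adj x y) :
    -2 + (triangles G x y : ℝ) * ((max (G.degree x) (G.degree y) : ℕ) : ℝ)⁻¹ ≤ ricci G x y := by
  rw [ricci_eq G hG h]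
  linarith [W1_le_bound G hG h]

end Aux

/-- On a connected locally finite graph, for a vertex `x` with `d_x ≥ 2`,
`((d_x-1)/d_x)·c(x) ≥ (1/d_x)·∑_{y∼x} κ(x,y) ≥ -2 + ((d_x-1)/(d_x∨D(x)))·c(x)`,
where `D(x) = max_{y∼x} d_y`. -/
theorem average_ricci_clustering (G : SimpleGraph V) [G.LocallyFinite]
    [DecidableRel G.Adj] [DecidableEq V]
    (hG : G.Connected) (x : V) (hx : 2 ≤ G.degree x) :
    (((G.degree x : ℝ) - 1) / (G.degree x : ℝ)) * clustering G x ≥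
      (G.degree x : ℝ)⁻¹ * ∑ y ∈ G.neighborFinset x, ricci G x y ∧
    (G.degree x : ℝ)⁻¹ * ∑ y ∈ G.neighborFinset x, ricci G x y ≥
      -2 + (((G.degree x : ℝ) - 1) /
          ((max (G.degree x) ((G.neighborFinset x).sup (fun z => G.degree z)) : ℕ) : ℝ)) *
        clustering G x := by
  have hn2 : (2:ℝ) ≤ (G.degree x : ℝ) := by exact_mod_cast hx
  have hn0 : (0:ℝ) < (G.degree x : ℝ) := by linarith
  have hn1 : (0:ℝ) < (G.degree x : ℝ) - 1 := by linarith
  have hDnat : 0 < max (G.degree x) ((G.neighborFinset x).sup (fun z => G.degree z)) :=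
    lt_of_lt_of_le (by omega) (le_max_left _ _)
  have hDm0 : (0:ℝ) <
      ((max (G.degree x) ((G.neighborFinset x).sup (fun z => G.degree z)) : ℕ) : ℝ) := by
    exact_mod_cast hDnat
  set n : ℝ := (G.degree x : ℝ) with hn
  set Dm : ℝ :=
    ((max (G.degree x) ((G.neighborFinset x).sup (fun z => G.degree z)) : ℕ) : ℝ) with hDmdef
  set S : ℝ := ∑ y ∈ G.neighborFinset x, (triangles G x y : ℝ) with hS
  have hS0 : 0 ≤ S := Finset.sum_nonneg (fun y _ => Nat.cast_nonneg _)
  have hadj : ∀ y ∈ G.neighborFinset x, G.Adj x y :=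
    fun y hy => (mem_neighborFinset G x y).mp hy
  have hclus : clustering G x = (n * (n - 1))⁻¹ * S := rfl
  constructor
  · rw [ge_iff_le]
    have h1 : ∑ y ∈ G.neighborFinset x, ricci G x y ≤
        ∑ y ∈ G.neighborFinset x, (triangles G x y : ℝ) * n⁻¹ :=
      Finset.sum_le_sum (fun y hy => ricci_le_bound G hG (hadj y hy))
    have h2 : ∑ y ∈ G.neighborFinset x, (triangles G x y : ℝ) * n⁻¹ = S * n⁻¹ :=
      (Finset.sum_mul _ _ _).symm
    have h3 : ((n - 1) / n) * clustering G x = n⁻¹ * (S * n⁻¹) := by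
      rw [hclus]; field_simp
    rw [h3]
    exact mul_le_mul_of_nonneg_left (h1.trans_eq h2) (inv_nonneg.mpr hn0.le)
  · rw [ge_iff_le]
    have key : ∀ y ∈ G.neighborFinset x, -2 + (triangles G x y : ℝ) * Dm⁻¹ ≤ ricci G x y := by
      intro y hy
      have h1 := le_ricci_bound G hG (hadj y hy)
      have hxy0 : (0:ℝ) < ((max (G.degree x) (G.degree y) : ℕ) : ℝ) := by
        have : 0 < max (G.degree x) (G.degree y) := lt_of_lt_of_le (by omega) (le_max_left _ _)
        exact_mod_cast this
      have hle : ((max (G.degree x) (G.degree y) : ℕ) : ℝ) ≤ Dm := by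
        rw [hDmdef]
        exact_mod_cast max_le_max le_rfl (Finset.le_sup (f := fun z => G.degree z) hy)
      have h2 : Dm⁻¹ ≤ ((max (G.degree x) (G.degree y) : ℕ) : ℝ)⁻¹ := inv_anti₀ hxy0 hle
      have h3 : (triangles G x y : ℝ) * Dm⁻¹ ≤
          (triangles G x y : ℝ) * ((max (G.degree x) (G.degree y) : ℕ) : ℝ)⁻¹ :=
        mul_le_mul_of_nonneg_left h2 (Nat.cast_nonneg _)
      linarith
    have h1 : ∑ y ∈ G.neighborFinset x, (-2 + (triangles G x y : ℝ) * Dm⁻¹) ≤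
        ∑ y ∈ G.neighborFinset x, ricci G x y := Finset.sum_le_sum key
    have h2 : ∑ y ∈ G.neighborFinset x, (-2 + (triangles G x y : ℝ) * Dm⁻¹) =
        -2 * n + S * Dm⁻¹ := by
      rw [Finset.sum_add_distrib, Finset.sum_const, ← Finset.sum_mul,
        card_neighborFinset_eq_degree, nsmul_eq_mul]
      ring
    have h3 := mul_le_mul_of_nonneg_left (h2 ▸ h1) (inv_nonneg.mpr hn0.le)
    have h4 : -2 + ((n - 1) / Dm) * clustering G x = n⁻¹ * (-2 * n + S * Dm⁻¹) := by
      rw [hclus]; field_simp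
    rw [h4]
    exact h3
end

section
/- Let G=(V,E) be a weighted undirected connected simple locally finite graph with edge weights w_{xy}>0 and let x,y be neighboring vertices. Then κ(x,y) ≤ ∑_{x₁∼x, x₁∼y} min(w_{x₁x}/d_x, w_{x₁y}/d_y), where the sum runs over all common neighbors x₁ of x and y. -/
open SimpleGraph Finset

variable {V : Type*}

/-- A system of edge weights on `G`: symmetric, positive on edges and zero elsewhere. -/
def IsWeight (G : SimpleGraph V) (w : V → V → ℝ) : Prop :=
  (∀ u v, w u v = w v u) ∧ (∀ u v, G.Adj u v → 0 < w u v) ∧ (∀ u v, ¬G.Adj u v → w u v = 0)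

/-- The weighted degree `d_x = ∑_{y∼x} w_{xy}`. -/
noncomputable def wdeg (G : SimpleGraph V) [G.LocallyFinite] (w : V → V → ℝ) (x : V) : ℝ :=
  ∑ y ∈ G.neighborFinset x, w x y

/-- The probability measure attached to a vertex `x`: `m_x(z) = w_{xz}/d_x` for `z ∼ x`. -/
noncomputable def wMeasure (G : SimpleGraph V) [G.LocallyFinite] [DecidableRel G.Adj]
    (w : V → V → ℝ) (x z : V) : ℝ :=
  if G.Adj x z then w x z / wdeg G w x else 0

/-- A coupling (transfer plan) between the measures `m_x` and `m_y`. -/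
def IsWCoupling (G : SimpleGraph V) [G.LocallyFinite] [DecidableRel G.Adj]
    (w : V → V → ℝ) (x y : V) (ξ : V → V → ℝ) : Prop :=
  (∀ u v, 0 ≤ ξ u v) ∧
  (∀ u v, ξ u v ≠ 0 → G.Adj x u ∧ G.Adj y v) ∧
  (∀ u, ∑ v ∈ G.neighborFinset y, ξ u v = wMeasure G w x u) ∧
  (∀ v, ∑ u ∈ G.neighborFinset x, ξ u v = wMeasure G w y v)

/-- The transportation distance `W₁(m_x, m_y)`. -/
noncomputable def wW1 (G : SimpleGraph V) [G.LocallyFinite] [DecidableRel G.Adj]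
    (w : V → V → ℝ) (x y : V) : ℝ :=
  sInf { c : ℝ | ∃ ξ : V → V → ℝ, IsWCoupling G w x y ξ ∧
    c = ∑ u ∈ G.neighborFinset x, ∑ v ∈ G.neighborFinset y, (G.dist u v : ℝ) * ξ u v }

/-- Ollivier's Ricci curvature `κ(x,y) = 1 - W₁(m_x,m_y)/d(x,y)` on a weighted graph. -/
noncomputable def wRicci (G : SimpleGraph V) [G.LocallyFinite] [DecidableRel G.Adj]
    (w : V → V → ℝ) (x y : V) : ℝ :=
  1 - wW1 G w x y / (G.dist x y : ℝ)

-- auxiliary lemmas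

lemma wMeasure_nonneg (G : SimpleGraph V) [G.LocallyFinite] [DecidableRel G.Adj]
    (w : V → V → ℝ) (hw : IsWeight G w) (x z : V) : 0 ≤ wMeasure G w x z := by
  unfold wMeasure
  split_ifs with h
  · have hwpos := hw.2.1 x z h
    have hd : 0 ≤ wdeg G w x := by
      unfold wdeg
      exact Finset.sum_nonneg fun u hu => (hw.2.1 x u ((SimpleGraph.mem_neighborFinset G x u).mp hu)).le
    positivity
  · exact le_refl 0

lemma wdeg_pos (G : SimpleGraph V) [G.LocallyFinite] (w : V → V → ℝ)
    (hw : IsWeight G w) {x y : V} (hxy : G.Adj x y) : 0 < wdeg G w x := by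
  unfold wdeg
  apply Finset.sum_pos
  · exact fun u hu => hw.2.1 x u ((SimpleGraph.mem_neighborFinset G x u).mp hu)
  · exact ⟨y, (SimpleGraph.mem_neighborFinset G x y).mpr hxy⟩

lemma wMeasure_sum (G : SimpleGraph V) [G.LocallyFinite] [DecidableRel G.Adj]
    (w : V → V → ℝ) (hw : IsWeight G w) {x y : V} (hxy : G.Adj x y) :
    ∑ z ∈ G.neighborFinset x, wMeasure G w x z = 1 := by
  have hd := wdeg_pos G w hw hxy
  unfold wMeasure
  rw [Finset.sum_congr rfl (fun z hz => if_pos ((SimpleGraph.mem_neighborFinset G x z).mp hz)),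
    ← Finset.sum_div]
  rw [show ∑ z ∈ G.neighborFinset x, w x z = wdeg G w x from rfl]
  field_simp

/-- On a weighted connected locally finite graph, for neighbors `x ∼ y`,
`κ(x,y) ≤ ∑_{x₁∼x, x₁∼y} (w_{x₁x}/d_x) ∧ (w_{x₁y}/d_y)`. -/
theorem wricci_upper_bound (G : SimpleGraph V) [G.LocallyFinite]
    [DecidableRel G.Adj] [DecidableEq V]
    (w : V → V → ℝ) (hw : IsWeight G w)
    (hG : G.Connected) (x y : V) (hxy : G.Adj x y) :
    wRicci G w x y ≤
      ∑ z ∈ G.neighborFinset x ∩ G.neighborFinset y,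
        min (w z x / wdeg G w x) (w z y / wdeg G w y) := by
  have hdx := wdeg_pos G w hw hxy
  have hdy := wdeg_pos G w hw hxy.symm
  have hmx := wMeasure_sum G w hw hxy
  have hmy := wMeasure_sum G w hw hxy.symm
  -- the set of costs is nonempty
  set S := { c : ℝ | ∃ ξ : V → V → ℝ, IsWCoupling G w x y ξ ∧
    c = ∑ u ∈ G.neighborFinset x, ∑ v ∈ G.neighborFinset y, (G.dist u v : ℝ) * ξ u v } with hS
  have hne : S.Nonempty := by
    refine ⟨_, fun u v => wMeasure G w x u * wMeasure G w y v, ⟨?_, ?_, ?_, ?_⟩, rfl⟩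
    · exact fun u v => mul_nonneg (wMeasure_nonneg G w hw x u) (wMeasure_nonneg G w hw y v)
    · intro u v h
      constructor
      · by_contra hadj
        simp [wMeasure, hadj] at h
      · by_contra hadj
        simp [wMeasure, hadj] at h
    · intro u
      rw [← Finset.mul_sum, hmy, mul_one]
    · intro v
      rw [← Finset.sum_mul, hmx, one_mul]
  -- lower bound for every element of S
  have hlow : ∀ c ∈ S, 1 - (∑ z ∈ G.neighborFinset x ∩ G.neighborFinset y,
      min (w z x / wdeg G w x) (w z y / wdeg G w y)) ≤ c := by
    rintro c ⟨ξ, ⟨hpos, hsupp, hm1, hm2⟩, rfl⟩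
    have key : ∀ u ∈ G.neighborFinset x,
        wMeasure G w x u - (if u ∈ G.neighborFinset y then ξ u u else 0)
          ≤ ∑ v ∈ G.neighborFinset y, (G.dist u v : ℝ) * ξ u v := by
      intro u hu
      rw [← hm1 u, ← Finset.sum_ite_eq' (G.neighborFinset y) u (fun v => ξ u v), ← Finset.sum_sub_distrib]
      apply Finset.sum_le_sum
      intro v hv
      by_cases hvu : v = u
      · subst hvu
        simp [SimpleGraph.dist_self]
      · rw [if_neg hvu]
        have h1 : (1 : ℝ) ≤ (G.dist u v : ℝ) := by
          have := hG.pos_dist_of_ne (fun h => hvu h.symm)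
          exact_mod_cast this
        nlinarith [hpos u v]
    have hsum : 1 - ∑ u ∈ G.neighborFinset x, (if u ∈ G.neighborFinset y then ξ u u else 0)
        ≤ ∑ u ∈ G.neighborFinset x, ∑ v ∈ G.neighborFinset y, (G.dist u v : ℝ) * ξ u v := by
      calc 1 - ∑ u ∈ G.neighborFinset x, (if u ∈ G.neighborFinset y then ξ u u else 0)
          = ∑ u ∈ G.neighborFinset x,
            (wMeasure G w x u - (if u ∈ G.neighborFinset y then ξ u u else 0)) := by
            rw [Finset.sum_sub_distrib, hmx]
        _ ≤ _ := Finset.sum_le_sum key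
    have hdiag : ∑ u ∈ G.neighborFinset x, (if u ∈ G.neighborFinset y then ξ u u else 0)
        ≤ ∑ z ∈ G.neighborFinset x ∩ G.neighborFinset y,
          min (w z x / wdeg G w x) (w z y / wdeg G w y) := by
      rw [← Finset.sum_filter]
      have hfe : (G.neighborFinset x).filter (· ∈ G.neighborFinset y)
          = G.neighborFinset x ∩ G.neighborFinset y := by
        ext z; simp [Finset.mem_inter, Finset.mem_filter]
      rw [hfe]
      apply Finset.sum_le_sum
      intro z hz
      rw [Finset.mem_inter] at hz
      obtain ⟨hzx, hzy⟩ := hz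
      have hzxa := (SimpleGraph.mem_neighborFinset G x z).mp hzx
      have hzya := (SimpleGraph.mem_neighborFinset G y z).mp hzy
      have h1 : ξ z z ≤ wMeasure G w x z := by
        rw [← hm1 z]; exact Finset.single_le_sum (fun v _ => hpos z v) hzy
      have h2 : ξ z z ≤ wMeasure G w y z := by
        rw [← hm2 z]; exact Finset.single_le_sum (fun u _ => hpos u z) hzx
      have e1 : wMeasure G w x z = w z x / wdeg G w x := by
        rw [wMeasure, if_pos hzxa, hw.1 x z]
      have e2 : wMeasure G w y z = w z y / wdeg G w y := by
        rw [wMeasure, if_pos hzya, hw.1 y z]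
      exact le_min (e1 ▸ h1) (e2 ▸ h2)
    linarith
  have hW1 : 1 - (∑ z ∈ G.neighborFinset x ∩ G.neighborFinset y,
      min (w z x / wdeg G w x) (w z y / wdeg G w y)) ≤ wW1 G w x y :=
    le_csInf hne hlow
  have hdist : G.dist x y = 1 := (SimpleGraph.dist_eq_one_iff_adj).mpr hxy
  unfold wRicci
  rw [hdist]
  push_cast
  linarith
end
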